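/- arXiv:0811.3460 — 5 statements merged into one kernel-verified Lean document; each statement's English description precedes it below -/
import Mathlib

section
/- Let r : ℕ → ℝ be a nondecreasing function, regularly varying of positive index ρ (i.e., for all λ > 0, r(⌊λ n⌋)/r(n) → λ^ρ as n → ∞) with r(n) → ∞. Then limsup_{k → ∞} (∑_{n ≥ k} e^{-r(n)}) / (k e^{-r(k)}) ≤ 1. -/
open Filter Real

/-!
Since `r (2n) / r n → 2^ρ > 1`, there is some `l > 1` with
`l · r n ≤ r (2n)` for large `n`. Then `r (2n) - r n → ∞`, so by Cauchy condensation and the ratio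
test `∑ e^{-c r n}` converges for every `c > 0`. Split the tail sum at `2k`: the first `k` terms are
at most `e^{-r k}` each, and with `θ = 1/l`, `c = 1 - θ`, every term beyond `2k` satisfies
`e^{-r (2k+n)} ≤ e^{-θ r (2k)} e^{-c r n} ≤ e^{-r k} e^{-c r n}`. Hence the sum is at most
`(k + C) e^{-r k}` with `C = ∑ e^{-c r n}`, and `C / k → 0`.
-/

section

variable {r : ℕ → ℝ}

lemma exists_one_lt_eventually_mul_le_two_mul {a : ℝ} (ha : 1 < a)
    (hratio : Tendsto (fun n => r (2 * n) / r n) atTop (nhds a))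
    (hpos : ∀ᶠ n in atTop, 0 < r n) :
    ∃ l, 1 < l ∧ ∀ᶠ n in atTop, l * r n ≤ r (2 * n) := by
  obtain ⟨l, hl1, hla⟩ := exists_between ha
  refine ⟨l, hl1, ?_⟩
  filter_upwards [hratio.eventually (eventually_gt_nhds hla), hpos] with n hn hrn
  exact ((lt_div_iff₀ hrn).1 hn).le

lemma tendsto_sub_two_mul_of_eventually_mul_le {l : ℝ} (hl : 1 < l)
    (hinf : Tendsto r atTop atTop) (hdouble : ∀ᶠ n in atTop, l * r n ≤ r (2 * n)) :
    Tendsto (fun n => r (2 * n) - r n) atTop atTop := by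
  refine tendsto_atTop_mono' atTop ?_ (hinf.const_mul_atTop (sub_pos.2 hl))
  filter_upwards [hdouble] with n hn
  linarith

lemma summable_exp_neg_of_tendsto_sub_two_mul (hmono : Monotone r)
    (hgap : Tendsto (fun n => r (2 * n) - r n) atTop atTop) :
    Summable fun n => exp (-r n) := by
  refine (summable_condensed_iff_of_nonneg (fun n => (exp_pos _).le)
    fun m n _ hmn => exp_le_exp.2 (neg_le_neg (hmono hmn))).1 ?_
  refine summable_of_ratio_norm_eventually_le (r := 1 / 2) (by norm_num) ?_
  have hpow := tendsto_pow_atTop_atTop_of_one_lt (α := ℕ) one_lt_two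
  filter_upwards [(hgap.comp hpow).eventually_ge_atTop (log 4)] with j hj
  simp only [Function.comp_apply, ← pow_succ'] at hj
  rw [norm_of_nonneg (by positivity), norm_of_nonneg (by positivity)]
  calc (2 : ℝ) ^ (j + 1) * exp (-r (2 ^ (j + 1)))
      ≤ 2 ^ (j + 1) * exp (-(log 4 + r (2 ^ j))) := by gcongr; linarith
    _ = 1 / 2 * (2 ^ j * exp (-r (2 ^ j))) := by
      rw [neg_add, exp_add, exp_neg, exp_log (by norm_num), pow_succ]
      ring

section Tail

variable {θ : ℝ} (hmono : Monotone r) (hθ0 : 0 ≤ θ) (hθ1 : θ ≤ 1)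
include hmono hθ0 hθ1

lemma exp_neg_add_le_mul (m n : ℕ) :
    exp (-r (m + n)) ≤ exp (-(θ * r m)) * exp (-((1 - θ) * r n)) := by
  rw [← exp_add, exp_le_exp]
  have hm := mul_le_mul_of_nonneg_left (hmono (Nat.le_add_right m n)) hθ0
  have hn := mul_le_mul_of_nonneg_left (hmono (Nat.le_add_left n m)) (sub_nonneg.2 hθ1)
  linarith

variable (hsum : Summable fun n => exp (-((1 - θ) * r n)))
include hsum

lemma summable_exp_neg_add (m : ℕ) : Summable fun n => exp (-r (m + n)) :=
  .of_nonneg_of_le (fun _ => (exp_pos _).le) (exp_neg_add_le_mul hmono hθ0 hθ1 m)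
    (hsum.mul_left _)

lemma tsum_exp_neg_add_le_mul (m : ℕ) :
    ∑' n, exp (-r (m + n)) ≤ exp (-(θ * r m)) * ∑' n, exp (-((1 - θ) * r n)) := by
  rw [← tsum_mul_left]
  exact (summable_exp_neg_add hmono hθ0 hθ1 hsum m).tsum_le_tsum
    (exp_neg_add_le_mul hmono hθ0 hθ1 m) (hsum.mul_left _)

lemma tsum_exp_neg_add_le {k : ℕ} (hk : r k ≤ θ * r (2 * k)) :
    ∑' n, exp (-r (k + n)) ≤ (k + ∑' n, exp (-((1 - θ) * r n))) * exp (-r k) := by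
  set C := ∑' n, exp (-((1 - θ) * r n))
  rw [← (summable_exp_neg_add hmono hθ0 hθ1 hsum k).sum_add_tsum_nat_add k]
  have hhead : ∑ i ∈ Finset.range k, exp (-r (k + i)) ≤ k * exp (-r k) := by
    simpa using Finset.sum_le_card_nsmul (Finset.range k) _ _
      fun i _ => exp_le_exp.2 (neg_le_neg (hmono (Nat.le_add_right k i)))
  have htail : ∑' n, exp (-r (k + (n + k))) ≤ exp (-r k) * C :=
    calc ∑' n, exp (-r (k + (n + k))) = ∑' n, exp (-r (2 * k + n)) := by
          congr! 5 with n; ring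
      _ ≤ exp (-(θ * r (2 * k))) * C := tsum_exp_neg_add_le_mul hmono hθ0 hθ1 hsum _
      _ ≤ exp (-r k) * C := by gcongr
  linarith

end Tail

end

/-- If `r : ℕ → ℝ` is nondecreasing, regularly varying of positive index `ρ`
and tends to infinity, then `∑_{n ≥ k} e^{-r n} ≲ k e^{-r k}`. -/
theorem stmt0 (r : ℕ → ℝ) (ρ : ℝ) (hρ : 0 < ρ)
    (hmono : Monotone r)
    (hRV : ∀ l : ℝ, 0 < l →
      Tendsto (fun n : ℕ => r ⌊l * n⌋₊ / r n) atTop (nhds (l ^ ρ)))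
    (hinf : Tendsto r atTop atTop) :
    limsup (fun k : ℕ =>
        (∑' n : ℕ, Real.exp (-r (k + n))) / (k * Real.exp (-r k))) atTop ≤ 1 := by
  have hratio : Tendsto (fun n => r (2 * n) / r n) atTop (nhds (2 ^ ρ)) :=
    (hRV 2 two_pos).congr fun n => by rw [← Nat.cast_ofNat, ← Nat.cast_mul, Nat.floor_natCast]
  obtain ⟨l, hl1, hdouble⟩ := exists_one_lt_eventually_mul_le_two_mul (one_lt_rpow one_lt_two hρ)
    hratio (hinf.eventually_gt_atTop 0)
  have hl0 : 0 < l := one_pos.trans hl1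
  have hc : 0 < 1 - l⁻¹ := sub_pos.2 (inv_lt_one_of_one_lt₀ hl1)
  have hsum : Summable fun n => exp (-((1 - l⁻¹) * r n)) :=
    summable_exp_neg_of_tendsto_sub_two_mul (hmono.const_mul hc.le) <| by
      simpa only [mul_sub] using
        (tendsto_sub_two_mul_of_eventually_mul_le hl1 hinf hdouble).const_mul_atTop hc
  set C := ∑' n, exp (-((1 - l⁻¹) * r n))
  have hbound : ∀ᶠ k : ℕ in atTop,
      (∑' n, exp (-r (k + n))) / (k * exp (-r k)) ≤ 1 + C / k := by
    filter_upwards [hdouble, eventually_gt_atTop 0] with k hk hk0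
    calc (∑' n, exp (-r (k + n))) / (k * exp (-r k))
        ≤ (k + C) * exp (-r k) / (k * exp (-r k)) := by
          gcongr
          exact tsum_exp_neg_add_le hmono (inv_nonneg.2 hl0.le) (inv_le_one_of_one_le₀ hl1.le) hsum
            ((le_inv_mul_iff₀ hl0).2 hk)
      _ = 1 + C / k := by field_simp
  have hlim : Tendsto (fun k : ℕ => 1 + C / k) atTop (nhds 1) := by
    simpa using (tendsto_const_div_atTop_nhds_zero_nat C).const_add 1
  calc limsup (fun k : ℕ => (∑' n, exp (-r (k + n))) / (k * exp (-r k))) atTop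
      ≤ limsup (fun k : ℕ => 1 + C / k) atTop :=
        limsup_le_limsup hbound (isCoboundedUnder_le_of_le atTop fun k =>
          div_nonneg (tsum_nonneg fun n => (exp_pos _).le) (by positivity)) hlim.isBoundedUnder_le
    _ = 1 := hlim.limsup_eq
end

section
/- Let X be a real random variable with mean 0, positive finite variance σ², and moment generating function φ₀ finite on [0,∞). Let γ ≥ 1 and k_γ(u) = γ(1−u)^{γ−1} for u ∈ [0,1). Define J₀(a) = sup_{λ>0} ( aλ − ∫₀¹ log φ₀(λ k_γ(u)) du ). Then J₀(x) > 0 for every x > 0. -/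
/-!
Since `E X = 0`, Jensen gives `φ₀ ≥ 1`, while a second-order bound on `exp` gives
`φ₀(t) ≤ 1 + C t²` for `t ∈ [0, 1]`, with `C = E[X² + 2 e^{2X}]` finite because `φ₀(2) < ∞`.
Hence `0 ≤ log φ₀(t) ≤ C t²`, and as `0 ≤ k_γ ≤ γ` on `(0, 1)`, the integral in `J₀` is at most
`C γ² λ²` for `λ ≤ 1/γ`; so `xλ` minus the integral is positive for small `λ > 0`.
-/

open MeasureTheory Set

namespace Real

theorem exp_le_one_add_add_sq {z : ℝ} (hz : z ≤ 1) : exp z ≤ 1 + z + z ^ 2 := by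
  rcases le_or_gt (-1) z with hz' | hz'
  · have h := abs_exp_sub_one_sub_id_le (abs_le.2 ⟨hz', hz⟩)
    linarith [le_abs_self (exp z - 1 - z)]
  · nlinarith [exp_le_one_iff.2 (by linarith : z ≤ 0)]

theorem sq_mul_exp_le_two_mul_exp_two_mul {y : ℝ} (hy : 0 ≤ y) :
    y ^ 2 * exp y ≤ 2 * exp (2 * y) := by
  have h := quadratic_le_exp_of_nonneg hy
  rw [two_mul y, exp_add]
  nlinarith [exp_pos y]

theorem exp_mul_le_one_add_mul_add_sq_mul {t : ℝ} (ht0 : 0 ≤ t) (ht1 : t ≤ 1) (y : ℝ) :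
    exp (t * y) ≤ 1 + t * y + t ^ 2 * (y ^ 2 + 2 * exp (2 * y)) := by
  rcases le_or_gt (t * y) 1 with hty | hty
  · have h := exp_le_one_add_add_sq hty
    nlinarith [exp_pos (2 * y), sq_nonneg t]
  · have hy : 0 < y := pos_of_mul_pos_right (one_pos.trans hty) ht0
    have hexp : exp (t * y) ≤ exp y := exp_le_exp.2 (by nlinarith)
    have hsq : 1 ≤ t ^ 2 * y ^ 2 := by nlinarith
    have h := sq_mul_exp_le_two_mul_exp_two_mul hy.le
    nlinarith [exp_pos y, sq_nonneg t]

end Real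

section Cumulant

variable {Ω : Type*} [MeasurableSpace Ω] {μ : Measure Ω} [IsProbabilityMeasure μ] {X : Ω → ℝ}

theorem one_le_integral_exp_mul (hX : Integrable X μ) (hmean : ∫ ω, X ω ∂μ = 0) {t : ℝ}
    (hexp : Integrable (fun ω => Real.exp (t * X ω)) μ) :
    1 ≤ ∫ ω, Real.exp (t * X ω) ∂μ := by
  have hlin : Integrable (fun ω => 1 + t * X ω) μ := (integrable_const 1).add (hX.const_mul t)
  calc 1 = ∫ ω, (1 + t * X ω) ∂μ := by
        rw [integral_add (integrable_const 1) (hX.const_mul t), integral_const_mul, hmean]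
        simp
    _ ≤ ∫ ω, Real.exp (t * X ω) ∂μ :=
        integral_mono hlin hexp fun ω => by linarith [Real.add_one_le_exp (t * X ω)]

theorem integral_exp_mul_le (hX : Integrable X μ) (hmean : ∫ ω, X ω ∂μ = 0)
    (hX2 : Integrable (fun ω => X ω ^ 2) μ)
    (hexp2 : Integrable (fun ω => Real.exp (2 * X ω)) μ) {t : ℝ} (ht0 : 0 ≤ t) (ht1 : t ≤ 1)
    (hexp : Integrable (fun ω => Real.exp (t * X ω)) μ) :
    ∫ ω, Real.exp (t * X ω) ∂μ ≤ 1 + (∫ ω, (X ω ^ 2 + 2 * Real.exp (2 * X ω)) ∂μ) * t ^ 2 := by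
  have hlin : Integrable (fun ω => 1 + t * X ω) μ := (integrable_const 1).add (hX.const_mul t)
  have hrem : Integrable (fun ω => t ^ 2 * (X ω ^ 2 + 2 * Real.exp (2 * X ω))) μ :=
    (hX2.add (hexp2.const_mul 2)).const_mul _
  calc ∫ ω, Real.exp (t * X ω) ∂μ
      ≤ ∫ ω, (1 + t * X ω + t ^ 2 * (X ω ^ 2 + 2 * Real.exp (2 * X ω))) ∂μ :=
        integral_mono hexp (hlin.add hrem) fun ω =>
          Real.exp_mul_le_one_add_mul_add_sq_mul ht0 ht1 (X ω)
    _ = 1 + (∫ ω, (X ω ^ 2 + 2 * Real.exp (2 * X ω)) ∂μ) * t ^ 2 := by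
        rw [integral_add hlin hrem, integral_add (integrable_const 1) (hX.const_mul t),
          integral_const_mul, integral_const_mul, hmean]
        simp only [integral_const, probReal_univ, one_smul]
        ring

theorem log_integral_exp_mul_mem_Icc (hX : Integrable X μ) (hmean : ∫ ω, X ω ∂μ = 0)
    (hX2 : Integrable (fun ω => X ω ^ 2) μ)
    (hexp : ∀ t, 0 ≤ t → Integrable (fun ω => Real.exp (t * X ω)) μ) {t : ℝ}
    (ht : t ∈ Icc 0 1) :
    Real.log (∫ ω, Real.exp (t * X ω) ∂μ) ∈
      Icc 0 ((∫ ω, (X ω ^ 2 + 2 * Real.exp (2 * X ω)) ∂μ) * t ^ 2) := by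
  have hlow := one_le_integral_exp_mul hX hmean (hexp t ht.1)
  have hup := integral_exp_mul_le hX hmean hX2 (hexp 2 zero_le_two) ht.1 ht.2 (hexp t ht.1)
  exact ⟨Real.log_nonneg hlow,
    (Real.log_le_sub_one_of_pos (one_pos.trans_le hlow)).trans (by linarith)⟩

end Cumulant

theorem setIntegral_Ioo_comp_mul_le {Λ k : ℝ → ℝ} {C γ l : ℝ}
    (hC : 0 ≤ C) (hΛ : ∀ t ∈ Icc (0 : ℝ) 1, Λ t ∈ Icc 0 (C * t ^ 2))
    (hk : ∀ u ∈ Ioo (0 : ℝ) 1, k u ∈ Icc 0 γ) (hl : 0 ≤ l) (hlγ : l * γ ≤ 1) :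
    ∫ u in Ioo (0 : ℝ) 1, Λ (l * k u) ≤ C * (l * γ) ^ 2 := by
  have hlk : ∀ u ∈ Ioo (0 : ℝ) 1, l * k u ∈ Icc 0 1 ∧ l * k u ≤ l * γ := fun u hu =>
    have hku := hk u hu
    ⟨⟨mul_nonneg hl hku.1, (mul_le_mul_of_nonneg_left hku.2 hl).trans hlγ⟩,
      mul_le_mul_of_nonneg_left hku.2 hl⟩
  calc ∫ u in Ioo (0 : ℝ) 1, Λ (l * k u) ≤ ∫ _ in Ioo (0 : ℝ) 1, C * (l * γ) ^ 2 := by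
        refine integral_mono_of_nonneg ?_ (integrableOn_const (by simp)) ?_ <;>
          filter_upwards [ae_restrict_mem measurableSet_Ioo] with u hu
        · exact (hΛ _ (hlk u hu).1).1
        · refine (hΛ _ (hlk u hu).1).2.trans (mul_le_mul_of_nonneg_left ?_ hC)
          exact pow_le_pow_left₀ (hlk u hu).1.1 (hlk u hu).2 2
    _ = C * (l * γ) ^ 2 := by simp

theorem rpow_kernel_mem_Icc {γ u : ℝ} (hγ : 1 ≤ γ) (hu : u ∈ Ioo (0 : ℝ) 1) :
    γ * (1 - u) ^ (γ - 1) ∈ Icc 0 γ := by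
  have h0 : 0 ≤ (1 - u) ^ (γ - 1) := Real.rpow_nonneg (by linarith [hu.2]) _
  have h1 : (1 - u) ^ (γ - 1) ≤ 1 :=
    Real.rpow_le_one (by linarith [hu.2]) (by linarith [hu.1]) (by linarith)
  exact ⟨by positivity, by nlinarith⟩

theorem exists_pos_mul_le_one_and_mul_sq_lt {γ x D : ℝ} (hγ : 0 < γ) (hx : 0 < x) (hD : 0 ≤ D) :
    ∃ l, 0 < l ∧ l * γ ≤ 1 ∧ D * l ^ 2 < x * l := by
  refine ⟨min γ⁻¹ (x / (D + 1)), by positivity, ?_, ?_⟩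
  · exact (mul_le_mul_of_nonneg_right (min_le_left _ _) hγ.le).trans_eq (inv_mul_cancel₀ hγ.ne')
  · set l := min γ⁻¹ (x / (D + 1))
    have hl : 0 < l := by positivity
    have hDl : D * l < x := by
      calc D * l ≤ D * (x / (D + 1)) := mul_le_mul_of_nonneg_left (min_le_right _ _) hD
        _ < x := by rw [mul_div_assoc', div_lt_iff₀ (by positivity)]; linarith
    calc D * l ^ 2 = D * l * l := by ring
      _ < x * l := mul_lt_mul_of_pos_right hDl hl

theorem stmt6_general {Ω : Type*} [MeasurableSpace Ω] (μ : Measure Ω) [IsProbabilityMeasure μ]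
    (X : Ω → ℝ) (hX : Measurable X)
    (hmean : ∫ ω, X ω ∂μ = 0)
    (hX2 : Integrable (fun ω => (X ω) ^ 2) μ)
    (hfin : ∀ l, 0 ≤ l → Integrable (fun ω => Real.exp (l * X ω)) μ)
    (γ : ℝ) (hγ : 1 ≤ γ)
    (φ₀ : ℝ → ℝ) (hφ₀ : ∀ l, φ₀ l = ∫ ω, Real.exp (l * X ω) ∂μ)
    (k : ℝ → ℝ) (hk : ∀ u, k u = if u < 1 then γ * (1 - u) ^ (γ - 1) else 0) :
    ∀ x : ℝ, 0 < x → ∃ l : ℝ, 0 < l ∧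
      0 < x * l - ∫ u in Set.Ioo (0 : ℝ) 1, Real.log (φ₀ (l * k u)) := by
  intro x hx
  have hXint : Integrable X μ :=
    ((memLp_two_iff_integrable_sq hX.aestronglyMeasurable).2 hX2).integrable one_le_two
  set C := ∫ ω, (X ω ^ 2 + 2 * Real.exp (2 * X ω)) ∂μ
  have hΛ : ∀ t ∈ Icc (0 : ℝ) 1, Real.log (φ₀ t) ∈ Icc 0 (C * t ^ 2) := fun t ht => by
    simpa only [hφ₀] using log_integral_exp_mul_mem_Icc hXint hmean hX2 hfin ht
  have hkγ : ∀ u ∈ Ioo (0 : ℝ) 1, k u ∈ Icc 0 γ := fun u hu => by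
    simpa only [hk u, if_pos hu.2] using rpow_kernel_mem_Icc hγ hu
  have hC : 0 ≤ C := integral_nonneg fun ω => by positivity
  obtain ⟨l, hl, hlγ, hlx⟩ :=
    exists_pos_mul_le_one_and_mul_sq_lt (one_pos.trans_le hγ) hx (mul_nonneg hC (sq_nonneg γ))
  refine ⟨l, hl, ?_⟩
  have hint := setIntegral_Ioo_comp_mul_le hC hΛ hkγ hl.le hlγ
  linarith [show C * (l * γ) ^ 2 = C * γ ^ 2 * l ^ 2 by ring]

/-- Positivity of `J₀` on the positive half-line:
`J₀(x) = sup_{λ>0} (xλ - ∫₀¹ log φ₀(λ k_γ(u)) du) > 0` for `x > 0`,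
equivalently, for every `x > 0` there is `λ > 0` making the expression positive. -/
theorem stmt6 {Ω : Type*} [MeasurableSpace Ω] (μ : Measure Ω) [IsProbabilityMeasure μ]
    (X : Ω → ℝ) (hX : Measurable X) (σ2 : ℝ) (hσ2 : 0 < σ2)
    (hmean : ∫ ω, X ω ∂μ = 0) (hvar : ∫ ω, (X ω) ^ 2 ∂μ = σ2)
    (hX2 : Integrable (fun ω => (X ω) ^ 2) μ)
    (hfin : ∀ l, 0 ≤ l → Integrable (fun ω => Real.exp (l * X ω)) μ)
    (γ : ℝ) (hγ : 1 ≤ γ)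
    (φ₀ : ℝ → ℝ) (hφ₀ : ∀ l, φ₀ l = ∫ ω, Real.exp (l * X ω) ∂μ)
    (k : ℝ → ℝ) (hk : ∀ u, k u = if u < 1 then γ * (1 - u) ^ (γ - 1) else 0) :
    ∀ x : ℝ, 0 < x → ∃ l : ℝ, 0 < l ∧
      0 < x * l - ∫ u in Set.Ioo (0 : ℝ) 1, Real.log (φ₀ (l * k u)) :=
  stmt6_general μ X hX hmean hX2 hfin γ hγ φ₀ hφ₀ k hk
end

section
/- Let μ < 0, σ > 0, γ > 1/2, and define J(a) = sup_{λ>0} ( aλ − λμ − (σ²/2) λ² γ²/(2γ−1) ) for a ≥ 0. Then J(a) = (a−μ)² (2γ−1) / (2σ²γ²), and inf_{x>0} x J(x^{−γ}) = (2/σ²)(2γ−1)^{(1/γ)−1} (−μ)^{2−1/γ}. -/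
private lemma stmt10_part1 (μ σ γ : ℝ) (hμ : μ < 0) (hσ : 0 < σ) (hγ : 1 / 2 < γ)
    (a : ℝ) (ha : 0 ≤ a) :
    IsGreatest {y : ℝ | ∃ l : ℝ, 0 < l ∧
        y = a * l - (l * μ + σ ^ 2 / 2 * l ^ 2 * γ ^ 2 / (2 * γ - 1))}
      ((a - μ) ^ 2 * (2 * γ - 1) / (2 * σ ^ 2 * γ ^ 2)) := by
  have hγ0 : 0 < γ := by linarith
  have hu : 0 < 2 * γ - 1 := by linarith
  have haμ : 0 < a - μ := by linarith
  constructor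
  · refine ⟨(a - μ) * (2 * γ - 1) / (σ ^ 2 * γ ^ 2), by positivity, ?_⟩
    field_simp
    ring
  · rintro y ⟨l, hl, rfl⟩
    have e2 : (a - μ) ^ 2 * (2 * γ - 1) / (2 * σ ^ 2 * γ ^ 2)
        - (a * l - (l * μ + σ ^ 2 / 2 * l ^ 2 * γ ^ 2 / (2 * γ - 1)))
        = (σ ^ 2 * γ ^ 2 * l - (a - μ) * (2 * γ - 1)) ^ 2
          / (2 * σ ^ 2 * γ ^ 2 * (2 * γ - 1)) := by
      field_simp
      ring
    have h0 : 0 ≤ (σ ^ 2 * γ ^ 2 * l - (a - μ) * (2 * γ - 1)) ^ 2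
          / (2 * σ ^ 2 * γ ^ 2 * (2 * γ - 1)) := by positivity
    linarith

private lemma stmt10_lb (μ σ γ : ℝ) (hμ : μ < 0) (hσ : 0 < σ) (hγ : 1 / 2 < γ)
    (t : ℝ) (ht : 0 < t) :
    2 / σ ^ 2 * (2 * γ - 1) ^ (1 / γ - 1) * (-μ) ^ (2 - 1 / γ)
      ≤ t ^ (-(1 / γ)) * ((t - μ) ^ 2 * (2 * γ - 1) / (2 * σ ^ 2 * γ ^ 2)) := by
  have hγ0 : 0 < γ := by linarith
  have hu : 0 < 2 * γ - 1 := by linarith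
  have hc : 0 < -μ := by linarith
  set β : ℝ := 1 / (2 * γ) with hβd
  have hβ0 : 0 < β := by positivity
  have hβ1 : β < 1 := by
    rw [hβd, div_lt_one (by linarith)]; linarith
  have h1β : 0 < 1 - β := by linarith
  have key := Real.geom_mean_le_arith_mean2_weighted hβ0.le h1β.le
    (div_pos ht hβ0).le (div_pos hc h1β).le (by ring)
  have hsum : β * (t / β) + (1 - β) * ((-μ) / (1 - β)) = t - μ := by
    field_simp
    ring
  set A : ℝ := (t / β) ^ β * ((-μ) / (1 - β)) ^ (1 - β) with hAd
  have hA0 : 0 < A :=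
    mul_pos (Real.rpow_pos_of_pos (div_pos ht hβ0) _)
      (Real.rpow_pos_of_pos (div_pos hc h1β) _)
  have hAle : A ≤ t - μ := key.trans_eq hsum
  have hsq : A ^ 2 ≤ (t - μ) ^ 2 := pow_le_pow_left₀ hA0.le hAle 2
  have h2β : 2 * β = 1 / γ := by rw [hβd]; field_simp
  have e1 : A ^ 2 = (t / β) ^ ((1:ℝ) / γ) * ((-μ) / (1 - β)) ^ (2 - 1 / γ) := by
    rw [hAd, mul_pow, ← Real.rpow_natCast ((t / β) ^ β) 2,
      ← Real.rpow_natCast (((-μ) / (1 - β)) ^ (1 - β)) 2,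
      ← Real.rpow_mul (div_pos ht hβ0).le, ← Real.rpow_mul (div_pos hc h1β).le]
    push_cast
    rw [show β * 2 = (1:ℝ) / γ by linarith [h2β],
      show (1 - β) * 2 = 2 - 1 / γ by linarith [h2β]]
  have e2 : (t / β) ^ ((1:ℝ) / γ) = t ^ ((1:ℝ) / γ) * (2 * γ) ^ ((1:ℝ) / γ) := by
    rw [show t / β = t * (2 * γ) by rw [hβd, div_div_eq_mul_div, div_one],
      Real.mul_rpow ht.le (by linarith : (0:ℝ) ≤ 2 * γ)]
  have e3 : t ^ (-(1 / γ)) * t ^ ((1:ℝ) / γ) = 1 := by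
    rw [← Real.rpow_add ht, show -(1 / γ) + (1:ℝ) / γ = 0 by ring, Real.rpow_zero]
  have e4 : (-μ) / (1 - β) = 2 * γ * ((-μ) / (2 * γ - 1)) := by
    rw [hβd, show (1:ℝ) - 1 / (2 * γ) = (2 * γ - 1) / (2 * γ) by
      rw [eq_div_iff (by positivity : (2:ℝ) * γ ≠ 0)]; field_simp,
      div_div_eq_mul_div]
    ring
  have e5 : ((-μ) / (1 - β)) ^ (2 - 1 / γ)
      = (2 * γ) ^ (2 - 1 / γ) * ((-μ) ^ (2 - 1 / γ) / (2 * γ - 1) ^ (2 - 1 / γ)) := by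
    rw [e4, Real.mul_rpow (by linarith : (0:ℝ) ≤ 2 * γ) (div_pos hc hu).le,
      Real.div_rpow hc.le hu.le]
  have e6 : (2 * γ) ^ ((1:ℝ) / γ) * (2 * γ) ^ (2 - 1 / γ) = 4 * γ ^ 2 := by
    rw [← Real.rpow_add (by linarith : (0:ℝ) < 2 * γ),
      show (1:ℝ) / γ + (2 - 1 / γ) = 2 by ring, Real.rpow_two]
    ring
  have e7 : (2 * γ - 1) ^ ((1:ℝ) / γ - 1) * (2 * γ - 1) ^ (2 - 1 / γ) = 2 * γ - 1 := by
    rw [← Real.rpow_add hu, show (1:ℝ) / γ - 1 + (2 - 1 / γ) = 1 by ring, Real.rpow_one]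
  have hxA : t ^ (-(1 / γ)) * A ^ 2
      = 4 * γ ^ 2 * ((-μ) ^ (2 - 1 / γ) / (2 * γ - 1) ^ (2 - 1 / γ)) := by
    rw [e1, e2, e5]
    calc t ^ (-(1 / γ)) * (t ^ ((1:ℝ) / γ) * (2 * γ) ^ ((1:ℝ) / γ) *
          ((2 * γ) ^ (2 - 1 / γ) * ((-μ) ^ (2 - 1 / γ) / (2 * γ - 1) ^ (2 - 1 / γ))))
        = (t ^ (-(1 / γ)) * t ^ ((1:ℝ) / γ)) * ((2 * γ) ^ ((1:ℝ) / γ) * (2 * γ) ^ (2 - 1 / γ)) *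
          ((-μ) ^ (2 - 1 / γ) / (2 * γ - 1) ^ (2 - 1 / γ)) := by ring
      _ = _ := by rw [e3, e6]; ring
  have hU2 : 0 < (2 * γ - 1) ^ (2 - 1 / γ) := Real.rpow_pos_of_pos hu _
  have hQ : 0 < (-μ) ^ (2 - 1 / γ) := Real.rpow_pos_of_pos hc _
  have hU1 : 0 < (2 * γ - 1) ^ ((1:ℝ) / γ - 1) := Real.rpow_pos_of_pos hu _
  have ht' : 0 < t ^ (-(1 / γ)) := Real.rpow_pos_of_pos ht _
  have hm : 2 / σ ^ 2 * (2 * γ - 1) ^ (1 / γ - 1) * (-μ) ^ (2 - 1 / γ)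
      = t ^ (-(1 / γ)) * A ^ 2 * (2 * γ - 1) / (2 * σ ^ 2 * γ ^ 2) := by
    rw [hxA]
    generalize (2 * γ - 1) ^ ((1:ℝ) / γ - 1) = U1 at *
    generalize (2 * γ - 1) ^ (2 - 1 / γ) = U2 at *
    generalize (-μ) ^ (2 - 1 / γ) = Q at *
    rw [← e7]
    field_simp
    ring
  calc 2 / σ ^ 2 * (2 * γ - 1) ^ (1 / γ - 1) * (-μ) ^ (2 - 1 / γ)
      = t ^ (-(1 / γ)) * A ^ 2 * (2 * γ - 1) / (2 * σ ^ 2 * γ ^ 2) := hm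
    _ ≤ t ^ (-(1 / γ)) * (t - μ) ^ 2 * (2 * γ - 1) / (2 * σ ^ 2 * γ ^ 2) :=
        (div_le_div_iff_of_pos_right (by positivity)).mpr
          (mul_le_mul_of_nonneg_right (mul_le_mul_of_nonneg_left hsq ht'.le) hu.le)
    _ = t ^ (-(1 / γ)) * ((t - μ) ^ 2 * (2 * γ - 1) / (2 * σ ^ 2 * γ ^ 2)) := by ring

/-- Explicit rate function and ruin exponent for Gaussian innovations:
`J(a) = sup_{λ>0} (aλ - λμ - (σ²/2)λ²γ²/(2γ-1)) = (a-μ)²(2γ-1)/(2σ²γ²)` and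
`inf_{x>0} x J(x^{-γ}) = (2/σ²)(2γ-1)^{1/γ-1}(-μ)^{2-1/γ}`. -/
theorem stmt10 (μ σ γ : ℝ) (hμ : μ < 0) (hσ : 0 < σ) (hγ : 1 / 2 < γ)
    (J : ℝ → ℝ)
    (hJ : ∀ a : ℝ, 0 ≤ a → J a =
      sSup {y : ℝ | ∃ l : ℝ, 0 < l ∧
        y = a * l - (l * μ + σ ^ 2 / 2 * l ^ 2 * γ ^ 2 / (2 * γ - 1))}) :
    (∀ a : ℝ, 0 ≤ a →
      J a = (a - μ) ^ 2 * (2 * γ - 1) / (2 * σ ^ 2 * γ ^ 2)) ∧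
    sInf {y : ℝ | ∃ x : ℝ, 0 < x ∧ y = x * J (x ^ (-γ))} =
      2 / σ ^ 2 * (2 * γ - 1) ^ (1 / γ - 1) * (-μ) ^ (2 - 1 / γ) := by
  have hγ0 : 0 < γ := by linarith
  have hu : 0 < 2 * γ - 1 := by linarith
  have hc : 0 < -μ := by linarith
  have part1 : ∀ a : ℝ, 0 ≤ a →
      J a = (a - μ) ^ 2 * (2 * γ - 1) / (2 * σ ^ 2 * γ ^ 2) := by
    intro a ha
    rw [hJ a ha]
    exact (stmt10_part1 μ σ γ hμ hσ hγ a ha).csSup_eq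
  refine ⟨part1, ?_⟩
  apply IsLeast.csInf_eq
  constructor
  · -- the infimum is attained
    set t : ℝ := (-μ) / (2 * γ - 1) with htd
    have ht : 0 < t := div_pos hc hu
    have hx : 0 < t ^ (-(1 / γ)) := Real.rpow_pos_of_pos ht _
    refine ⟨t ^ (-(1 / γ)), hx, ?_⟩
    have hxt : (t ^ (-(1 / γ))) ^ (-γ) = t := by
      rw [← Real.rpow_mul ht.le, show -(1 / γ) * -γ = 1 by field_simp, Real.rpow_one]
    rw [hxt, part1 t ht.le]
    have h1 : t ^ (-(1 / γ)) = (2 * γ - 1) ^ ((1:ℝ) / γ) / (-μ) ^ ((1:ℝ) / γ) := by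
      rw [Real.rpow_neg ht.le, htd, Real.div_rpow hc.le hu.le, inv_div]
    have h2 : (-μ) ^ (2 - 1 / γ) = (-μ) ^ 2 / (-μ) ^ ((1:ℝ) / γ) := by
      rw [Real.rpow_sub hc, Real.rpow_two]
    have h3 : (2 * γ - 1) ^ ((1:ℝ) / γ - 1) = (2 * γ - 1) ^ ((1:ℝ) / γ) / (2 * γ - 1) := by
      rw [Real.rpow_sub hu, Real.rpow_one]
    have htμ : t - μ = 2 * γ * (-μ) / (2 * γ - 1) := by
      rw [htd]; field_simp; ring
    have hP : 0 < (-μ) ^ ((1:ℝ) / γ) := Real.rpow_pos_of_pos hc _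
    have hU : 0 < (2 * γ - 1) ^ ((1:ℝ) / γ) := Real.rpow_pos_of_pos hu _
    rw [h1, h2, h3, htμ]
    field_simp
  · rintro y ⟨x, hx, rfl⟩
    have ht : 0 < x ^ (-γ) := Real.rpow_pos_of_pos hx _
    rw [part1 _ ht.le]
    have hxt : x = (x ^ (-γ)) ^ (-(1 / γ)) := by
      rw [← Real.rpow_mul hx.le, show -γ * -(1 / γ) = 1 by field_simp, Real.rpow_one]
    calc 2 / σ ^ 2 * (2 * γ - 1) ^ (1 / γ - 1) * (-μ) ^ (2 - 1 / γ)
        ≤ (x ^ (-γ)) ^ (-(1 / γ)) *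
            ((x ^ (-γ) - μ) ^ 2 * (2 * γ - 1) / (2 * σ ^ 2 * γ ^ 2)) :=
          stmt10_lb μ σ γ hμ hσ hγ _ ht
      _ = x * ((x ^ (-γ) - μ) ^ 2 * (2 * γ - 1) / (2 * σ ^ 2 * γ ^ 2)) := by rw [← hxt]
end

section
/- Let h : [0,∞) → [0,∞) be continuous with h(0) = 0, and let γ ∈ (0,1). If h is regularly varying at infinity of index β with β(1−γ) < 1, then for every λ > 0 the integral ∫₀¹ h(λ γ(1−u)^{γ−1}) du is finite, and lim_{ε→0} ∫₀^ε h(λ u^{γ−1}) du = 0. -/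
open MeasureTheory Filter Set Topology

/-! For every `ρ > β`, regular variation gives the doubling bound `h (2t) ≤ 2^ρ h t` for large `t`;
iterating it dyadically, with continuity on a compact interval for small arguments, yields the
Potter-type bound `h s ≤ C (1 + s^ρ)`. Taking `ρ ∈ (max β 0, 1/(1-γ))`, the function
`u ↦ h (c u^(γ-1))` is dominated on `(0,1)` by `C + C' u^((γ-1)ρ)` with `(γ-1)ρ > -1`, hence
integrable. The first claim follows by the reflection `u ↦ 1 - u`, the second by continuity of the
primitive of an integrable function. -/

lemma le_mul_div_rpow_of_doubling {f : ℝ → ℝ} {ρ T M : ℝ} (hρ : 0 ≤ ρ) (hT : 0 < T)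
    (hM0 : 0 ≤ M) (hM : ∀ s ∈ Icc T (2 * T), f s ≤ M)
    (hdouble : ∀ t, T ≤ t → f (t * 2) ≤ 2 ^ ρ * f t) :
    ∀ s, T ≤ s → f s ≤ M * (s / T) ^ ρ := by
  have base : ∀ s ∈ Icc T (2 * T), f s ≤ M * (s / T) ^ ρ := fun s hs =>
    (hM s hs).trans <| le_mul_of_one_le_right hM0 <|
      Real.one_le_rpow ((one_le_div hT).2 hs.1) hρ
  have dyadic : ∀ n : ℕ, ∀ s ∈ Icc T (2 ^ n * (2 * T)), f s ≤ M * (s / T) ^ ρ := by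
    intro n
    induction n with
    | zero => simpa using base
    | succ n ih =>
      intro s hs
      rcases le_or_gt s (2 * T) with hs2 | hs2
      · exact base s ⟨hs.1, hs2⟩
      have hhalf : s / 2 ∈ Icc T (2 ^ n * (2 * T)) :=
        ⟨by linarith, by rw [pow_succ] at hs; linarith [hs.2]⟩
      calc f s = f (s / 2 * 2) := by rw [div_mul_cancel₀ s two_ne_zero]
        _ ≤ 2 ^ ρ * f (s / 2) := hdouble _ hhalf.1
        _ ≤ 2 ^ ρ * (M * (s / 2 / T) ^ ρ) := by gcongr; exact ih _ hhalf
        _ = M * (s / T) ^ ρ := by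
          rw [mul_left_comm, ← Real.mul_rpow (by norm_num) (div_nonneg (by linarith [hs.1]) hT.le)]
          congr 2
          field_simp
  intro s hs
  obtain ⟨n, hn⟩ := pow_unbounded_of_one_lt (s / (2 * T)) one_lt_two
  exact dyadic n s ⟨hs, ((div_lt_iff₀ (by positivity)).1 hn).le⟩

lemma exists_le_mul_one_add_rpow_of_doubling {h : ℝ → ℝ} {ρ : ℝ} (hρ : 0 ≤ ρ)
    (hcont : ContinuousOn h (Ici 0)) (hdouble : ∀ᶠ t in atTop, h (t * 2) ≤ 2 ^ ρ * h t) :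
    ∃ C, ∀ s, 0 ≤ s → h s ≤ C * (1 + s ^ ρ) := by
  obtain ⟨T₀, hT₀⟩ := hdouble.exists_forall_of_atTop
  set T := max T₀ 1
  have hT1 : 1 ≤ T := le_max_right _ _
  obtain ⟨M, hM⟩ := (isCompact_Icc (a := 0) (b := 2 * T)).exists_bound_of_continuousOn
    (hcont.mono fun x hx => hx.1)
  have hM0 : 0 ≤ M := (norm_nonneg _).trans (hM 0 ⟨le_rfl, by positivity⟩)
  have hle : ∀ s ∈ Icc 0 (2 * T), h s ≤ M := fun s hs => (le_abs_self _).trans (hM s hs)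
  have large := le_mul_div_rpow_of_doubling hρ (by positivity) hM0
    (fun s hs => hle s ⟨by linarith [hs.1], hs.2⟩) fun t ht => hT₀ t ((le_max_left _ _).trans ht)
  refine ⟨M, fun s hs => ?_⟩
  have hsρ : 0 ≤ s ^ ρ := Real.rpow_nonneg hs ρ
  rcases le_or_gt s T with hsT | hsT
  · calc h s ≤ M := hle s ⟨hs, by linarith⟩
      _ ≤ M * (1 + s ^ ρ) := le_mul_of_one_le_right hM0 (by linarith)
  · calc h s ≤ M * (s / T) ^ ρ := large s hsT.le
      _ ≤ M * (1 + s ^ ρ) := by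
        gcongr
        calc (s / T) ^ ρ ≤ s ^ ρ := by gcongr; exact div_le_self hs hT1
          _ ≤ 1 + s ^ ρ := by linarith

lemma eventually_le_mul_of_tendsto_div {α : Type*} {l : Filter α} {f g : α → ℝ} {L c : ℝ}
    (hfg : Tendsto (fun x => f x / g x) l (𝓝 L)) (hL : 0 < L) (hc : L < c)
    (hg : ∀ᶠ x in l, 0 ≤ g x) : ∀ᶠ x in l, f x ≤ c * g x := by
  filter_upwards [hfg.eventually_const_lt hL, hfg.eventually_lt_const hc, hg] with x hpos hlt hg0
  have hgx : 0 < g x := hg0.lt_of_ne fun h => by simp [← h] at hpos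
  exact ((div_lt_iff₀ hgx).1 hlt).le

lemma integrableOn_comp_mul_rpow_Ioo {h : ℝ → ℝ} {a ρ C c : ℝ} (hρ : -1 < a * ρ)
    (hcont : ContinuousOn h (Ici 0)) (hnonneg : ∀ x, 0 ≤ x → 0 ≤ h x)
    (hC : ∀ s, 0 ≤ s → h s ≤ C * (1 + s ^ ρ)) (hc : 0 ≤ c) :
    IntegrableOn (fun u => h (c * u ^ a)) (Ioo 0 1) := by
  have harg : ∀ u ∈ Ioo (0:ℝ) 1, 0 ≤ c * u ^ a := fun u hu =>
    mul_nonneg hc (Real.rpow_nonneg hu.1.le a)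
  have hdom : IntegrableOn (fun u : ℝ => C + C * c ^ ρ * u ^ (a * ρ)) (Ioo 0 1) :=
    (integrableOn_const measure_Ioo_lt_top.ne).add (((intervalIntegral.intervalIntegrable_rpow' hρ).1.mono_set
      Ioo_subset_Ioc_self).const_mul _)
  have hmeas : AEStronglyMeasurable (fun u => h (c * u ^ a)) (volume.restrict (Ioo 0 1)) :=
    (hcont.comp (continuousOn_const.mul (continuousOn_id.rpow_const fun u hu => Or.inl hu.1.ne'))
      harg).aestronglyMeasurable measurableSet_Ioo
  refine hdom.mono' hmeas ((ae_restrict_iff' measurableSet_Ioo).2 (ae_of_all _ fun u hu => ?_))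
  rw [Real.norm_of_nonneg (hnonneg _ (harg u hu))]
  calc h (c * u ^ a) ≤ C * (1 + (c * u ^ a) ^ ρ) := hC _ (harg u hu)
    _ = C + C * c ^ ρ * u ^ (a * ρ) := by
      rw [Real.mul_rpow hc (Real.rpow_nonneg hu.1.le a), ← Real.rpow_mul hu.1.le]
      ring

lemma IntegrableOn.comp_sub_left_Ioo {f : ℝ → ℝ} {a b : ℝ} (hab : a ≤ b)
    (hf : IntegrableOn f (Ioo a b)) (c : ℝ) :
    IntegrableOn (fun x => f (c - x)) (Ioo (c - b) (c - a)) := by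
  rw [← intervalIntegrable_iff_integrableOn_Ioo_of_le hab] at hf
  rw [← intervalIntegrable_iff_integrableOn_Ioo_of_le (by linarith)]
  exact (hf.comp_sub_left c).symm

lemma tendsto_setIntegral_Ioo_nhdsGT {f : ℝ → ℝ} {a b : ℝ} (hab : a < b)
    (hf : IntegrableOn f (Ioo a b)) :
    Tendsto (fun ε => ∫ u in Ioo a ε, f u) (𝓝[>] a) (𝓝 0) := by
  have hcont := intervalIntegral.continuousOn_primitive
    (integrableOn_Icc_iff_integrableOn_Ioo (f := f) |>.mpr hf) a (left_mem_Icc.2 hab.le)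
  rw [ContinuousWithinAt, nhdsWithin_Icc_eq_nhdsGE hab] at hcont
  simp only [Ioc_self, Measure.restrict_empty, integral_zero_measure] at hcont
  simpa only [integral_Ioc_eq_integral_Ioo] using
    hcont.mono_left (nhdsWithin_mono _ Ioi_subset_Ici_self)

theorem stmt12_general (h : ℝ → ℝ) (γ β : ℝ) (hγ0 : 0 < γ) (hγ1 : γ < 1)
    (hβ : β * (1 - γ) < 1)
    (hcont : ContinuousOn h (Set.Ici 0))
    (hnonneg : ∀ x : ℝ, 0 ≤ x → 0 ≤ h x)
    (hRV : ∀ x : ℝ, 0 < x →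
      Tendsto (fun t : ℝ => h (t * x) / h t) atTop (nhds (x ^ β))) :
    (∀ l : ℝ, 0 < l →
      IntegrableOn (fun u => h (l * (γ * (1 - u) ^ (γ - 1)))) (Set.Ioo 0 1)) ∧
    (∀ l : ℝ, 0 < l →
      Tendsto (fun ε : ℝ => ∫ u in Set.Ioo 0 ε, h (l * u ^ (γ - 1)))
        (nhdsWithin 0 (Set.Ioi 0)) (nhds 0)) := by
  have hγ' : 0 < 1 - γ := sub_pos.2 hγ1
  obtain ⟨ρ, hβρ, hργ⟩ := exists_between <|
    max_lt ((lt_div_iff₀ hγ').2 (by linarith)) (one_div_pos.2 hγ')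
  have hρ : -1 < (γ - 1) * ρ := by
    have := (lt_div_iff₀ hγ').1 hργ
    linarith
  have hdouble : ∀ᶠ t in atTop, h (t * 2) ≤ 2 ^ ρ * h t :=
    eventually_le_mul_of_tendsto_div (hRV 2 two_pos) (by positivity)
      (Real.rpow_lt_rpow_of_exponent_lt one_lt_two ((le_max_left _ _).trans_lt hβρ))
      ((eventually_ge_atTop 0).mono hnonneg)
  obtain ⟨C, hC⟩ :=
    exists_le_mul_one_add_rpow_of_doubling ((le_max_right β 0).trans hβρ.le) hcont hdouble
  have hint : ∀ c, 0 ≤ c → IntegrableOn (fun u => h (c * u ^ (γ - 1))) (Ioo 0 1) :=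
    fun c hc => integrableOn_comp_mul_rpow_Ioo hρ hcont hnonneg hC hc
  refine ⟨fun l hl => ?_, fun l hl => tendsto_setIntegral_Ioo_nhdsGT one_pos (hint l hl.le)⟩
  simpa [mul_assoc] using IntegrableOn.comp_sub_left_Ioo zero_le_one (hint (l * γ) (by positivity)) 1

/-- If `h ≥ 0` is continuous on `[0,∞)` with `h(0) = 0` and regularly varying of
index `β` with `β(1-γ) < 1` for `γ ∈ (0,1)`, then `∫₀¹ h(λγ(1-u)^{γ-1}) du` is
finite for every `λ > 0`, and `∫₀^ε h(λ u^{γ-1}) du → 0` as `ε → 0⁺`. -/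
theorem stmt12 (h : ℝ → ℝ) (γ β : ℝ) (hγ0 : 0 < γ) (hγ1 : γ < 1)
    (hβ : β * (1 - γ) < 1)
    (hcont : ContinuousOn h (Set.Ici 0)) (h0 : h 0 = 0)
    (hnonneg : ∀ x : ℝ, 0 ≤ x → 0 ≤ h x)
    (hRV : ∀ x : ℝ, 0 < x →
      Tendsto (fun t : ℝ => h (t * x) / h t) atTop (nhds (x ^ β))) :
    (∀ l : ℝ, 0 < l →
      IntegrableOn (fun u => h (l * (γ * (1 - u) ^ (γ - 1)))) (Set.Ioo 0 1)) ∧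
    (∀ l : ℝ, 0 < l →
      Tendsto (fun ε : ℝ => ∫ u in Set.Ioo 0 ε, h (l * u ^ (γ - 1)))
        (nhdsWithin 0 (Set.Ioi 0)) (nhds 0)) :=
  stmt12_general h γ β hγ0 hγ1 hβ hcont hnonneg hRV
end

section
/- Let g be analytic on (−1,1) with nonnegative Taylor coefficients (gᵢ), with g₀ > 0, and suppose c₁ := liminf_{n→∞} gₙ > 0 and g is regularly varying at 1 of index γ > 0, meaning g(1−1/(λt))/g(1−1/t) → λ^γ for all λ > 0 as t → ∞. Define U so that g(1 − 1/U(t)) ~ t as t → ∞. Then limsup_{t→∞} U(t)·c₁·Γ(γ)/t ≤ 1, i.e., U(t) ≲ t/(c₁ Γ(γ)). -/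
open Filter

/-- Lemma 5.1.2(i): if the coefficients of `g` satisfy `liminf gₙ = c₁ > 0` and
`g` is regularly varying at `1` of index `γ > 0`, and `U` satisfies
`g(1 - 1/U(t)) ~ t`, then `U(t) ≲ t / (c₁ Γ(γ))`. -/
theorem stmt14 (g : ℝ → ℝ) (gc : ℕ → ℝ) (γ c1 : ℝ) (hγ : 0 < γ)
    (hsum : ∀ x : ℝ, x ∈ Set.Ioo (-1 : ℝ) 1 → HasSum (fun i : ℕ => gc i * x ^ i) (g x))
    (hgc : ∀ i, 0 ≤ gc i) (hgc0 : 0 < gc 0)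
    (hc1 : c1 = liminf (fun n : ℕ => gc n) atTop) (hc1pos : 0 < c1)
    (hRV : ∀ l : ℝ, 0 < l →
      Tendsto (fun t : ℝ => g (1 - 1 / (l * t)) / g (1 - 1 / t)) atTop
        (nhds (l ^ γ)))
    (U : ℝ → ℝ)
    (hU : Tendsto (fun t : ℝ => g (1 - 1 / U t) / t) atTop (nhds 1)) :
    limsup (fun t : ℝ => U t * c1 * Real.Gamma γ / t) atTop ≤ 1 := by
  have hΓ : 0 < Real.Gamma γ := Real.Gamma_pos_of_pos hγ
  -- extraction from the liminf hypothesis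
  have hlim : ∀ K' : ℝ, K' < c1 → ∃ N : ℕ, ∀ n ≥ N, K' ≤ gc n := by
    intro K' hK'
    have h0S : (0 : ℝ) ∈ {a : ℝ | ∀ᶠ n in atTop, a ≤ gc n} :=
      Eventually.of_forall hgc
    by_cases hbdd : BddAbove {a : ℝ | ∀ᶠ n in atTop, a ≤ gc n}
    · have hceq : c1 = sSup {a : ℝ | ∀ᶠ n in atTop, a ≤ gc n} := by
        rw [hc1, liminf_eq]
      obtain ⟨a, haS, hKa⟩ := exists_lt_of_lt_csSup ⟨0, h0S⟩ (by rw [← hceq]; exact hK')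
      obtain ⟨N, hN⟩ := eventually_atTop.1 haS
      exact ⟨N, fun n hn => hKa.le.trans (hN n hn)⟩
    · exfalso
      have : c1 = 0 := by rw [hc1, liminf_eq, Real.sSup_of_not_bddAbove hbdd]
      linarith
  -- geometric series lower bound
  have hseries : ∀ (K' : ℝ) (N : ℕ), 0 ≤ K' → (∀ n ≥ N, K' ≤ gc n) →
      ∀ x : ℝ, 0 < x → x < 1 → K' * x ^ N * (1 - x)⁻¹ ≤ g x := by
    intro K' N hK'0 hN x hx0 hx1
    have hx : x ∈ Set.Ioo (-1 : ℝ) 1 := ⟨by linarith, hx1⟩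
    have hgeo : HasSum (fun i : ℕ => K' * x ^ N * x ^ i) (K' * x ^ N * (1 - x)⁻¹) :=
      (hasSum_geometric_of_lt_one hx0.le hx1).mul_left _
    have hgsum := hsum x hx
    have hle := Summable.tsum_le_tsum_of_inj (f := fun i : ℕ => K' * x ^ N * x ^ i)
      (g := fun i : ℕ => gc i * x ^ i) (fun i : ℕ => N + i)
      (fun a b h => Nat.add_left_cancel h)
      (fun c _ => mul_nonneg (hgc c) (pow_nonneg hx0.le c))
      (fun b => by
        show K' * x ^ N * x ^ b ≤ gc (N + b) * x ^ (N + b)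
        rw [pow_add, mul_assoc]
        exact mul_le_mul_of_nonneg_right (hN _ (Nat.le_add_right _ _))
          (by positivity))
      hgeo.summable hgsum.summable
    rwa [hgeo.tsum_eq, hgsum.tsum_eq] at hle
  -- linear lower bound for any K < c1
  have hA : ∀ K : ℝ, 0 ≤ K → K < c1 → ∀ᶠ u in atTop, K * u ≤ g (1 - 1 / u) := by
    intro K hK0 hK
    obtain ⟨N, hN⟩ := hlim ((K + c1) / 2) (by linarith)
    have hK'0 : (0 : ℝ) ≤ (K + c1) / 2 := by linarith
    have h1 : Tendsto (fun u : ℝ => 1 - 1 / u) atTop (nhds 1) := by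
      have := (tendsto_const_nhds (α := ℝ) (x := (1 : ℝ)) (f := atTop)).sub
        tendsto_inv_atTop_zero
      simpa [one_div] using this
    have htend : Tendsto (fun u : ℝ => (K + c1) / 2 * (1 - 1 / u) ^ N) atTop
        (nhds ((K + c1) / 2)) := by
      have := (h1.pow N).const_mul ((K + c1) / 2)
      simpa using this
    have hev : ∀ᶠ u in atTop, K ≤ (K + c1) / 2 * (1 - 1 / u) ^ N :=
      htend.eventually (eventually_ge_nhds (by linarith))
    filter_upwards [hev, eventually_gt_atTop 1] with u h1u h2u
    have hu0 : (0 : ℝ) < u := by linarith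
    have hx0 : 0 < 1 - 1 / u := by
      rw [sub_pos]
      exact (div_lt_one hu0).mpr h2u
    have hx1 : 1 - 1 / u < 1 := by
      have : 0 < 1 / u := by positivity
      linarith
    have hser := hseries ((K + c1) / 2) N hK'0 hN _ hx0 hx1
    have hsimp : (1 - (1 - 1 / u))⁻¹ = u := by
      rw [sub_sub_cancel, one_div, inv_inv]
    rw [hsimp] at hser
    calc K * u ≤ (K + c1) / 2 * (1 - 1 / u) ^ N * u :=
          mul_le_mul_of_nonneg_right h1u hu0.le
      _ ≤ g (1 - 1 / u) := hser
  -- main linear lower bound with the Gamma constant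
  have hMain : ∀ K : ℝ, 0 < K → K < c1 * Real.Gamma γ →
      ∀ᶠ u in atTop, K * u ≤ g (1 - 1 / u) := by
    intro K hK0 hK
    rcases lt_trichotomy γ 1 with hγ1 | hγ1 | hγ1
    · -- γ < 1
      set l : ℝ := max 1 ((4 * K / c1) ^ ((1 - γ)⁻¹)) with hldef
      have hl1 : (1 : ℝ) ≤ l := le_max_left _ _
      have hl0 : (0 : ℝ) < l := lt_of_lt_of_le one_pos hl1
      have h4 : (0 : ℝ) ≤ 4 * K / c1 := by positivity
      have hlK : 4 * K / c1 ≤ l ^ (1 - γ) := by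
        calc 4 * K / c1 = ((4 * K / c1) ^ ((1 - γ)⁻¹)) ^ (1 - γ) := by
              rw [← Real.rpow_mul h4, inv_mul_cancel₀ (by linarith : (1 : ℝ) - γ ≠ 0),
                Real.rpow_one]
          _ ≤ l ^ (1 - γ) := Real.rpow_le_rpow (Real.rpow_nonneg h4 _)
              (le_max_right _ _) (by linarith)
      have hlγ : 0 < l ^ γ := Real.rpow_pos_of_pos hl0 γ
      have E1 : ∀ᶠ t in atTop, g (1 - 1 / (l * t)) / g (1 - 1 / t) < 2 * l ^ γ :=
        (hRV l hl0).eventually (eventually_lt_nhds (by linarith))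
      have E2 : ∀ᶠ t in atTop, c1 / 2 * t ≤ g (1 - 1 / t) :=
        hA (c1 / 2) (by linarith) (by linarith)
      have E2' : ∀ᶠ t in atTop, c1 / 2 * (l * t) ≤ g (1 - 1 / (l * t)) := by
        have hm : Tendsto (fun t : ℝ => l * t) atTop atTop :=
          Tendsto.const_mul_atTop hl0 tendsto_id
        exact hm.eventually E2
      have h5 : l ^ (1 - γ) * l ^ γ = l := by
        rw [← Real.rpow_add hl0]; simp
      have h6 : 4 * K ≤ c1 * l ^ (1 - γ) := by
        rw [div_le_iff₀ hc1pos] at hlK; linarith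
      filter_upwards [E1, E2, E2', eventually_gt_atTop 0] with t h1 h2 h2' h3
      have hft : 0 < g (1 - 1 / t) := lt_of_lt_of_le (by positivity) h2
      have h7 : g (1 - 1 / (l * t)) < 2 * l ^ γ * g (1 - 1 / t) := by
        rw [div_lt_iff₀ hft] at h1; linarith
      have h9 : 4 * K * l ^ γ * t ≤ c1 * l ^ (1 - γ) * l ^ γ * t := by
        have := mul_le_mul_of_nonneg_right h6 (mul_nonneg hlγ.le h3.le)
        nlinarith [this]
      have h10 : c1 * l ^ (1 - γ) * l ^ γ * t = c1 * (l * t) := by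
        rw [mul_assoc c1, h5]; ring
      have h11 : 4 * K * l ^ γ * t ≤ 4 * l ^ γ * g (1 - 1 / t) := by
        nlinarith [h9, h10, h2', h7]
      nlinarith [h11, hlγ]
    · -- γ = 1
      have hΓ1 : Real.Gamma γ = 1 := by rw [hγ1]; exact Real.Gamma_one
      rw [hΓ1, mul_one] at hK
      exact hA K hK0.le hK
    · -- γ > 1
      set l : ℝ := max 1 ((4 * K / c1) ^ ((γ - 1)⁻¹)) with hldef
      have hl1 : (1 : ℝ) ≤ l := le_max_left _ _
      have hl0 : (0 : ℝ) < l := lt_of_lt_of_le one_pos hl1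
      have h4 : (0 : ℝ) ≤ 4 * K / c1 := by positivity
      have hlK : 4 * K / c1 ≤ l ^ (γ - 1) := by
        calc 4 * K / c1 = ((4 * K / c1) ^ ((γ - 1)⁻¹)) ^ (γ - 1) := by
              rw [← Real.rpow_mul h4, inv_mul_cancel₀ (by linarith : γ - 1 ≠ 0),
                Real.rpow_one]
          _ ≤ l ^ (γ - 1) := Real.rpow_le_rpow (Real.rpow_nonneg h4 _)
              (le_max_right _ _) (by linarith)
      have hlγ : 0 < l ^ γ := Real.rpow_pos_of_pos hl0 γ
      have E1 : ∀ᶠ t in atTop, l ^ γ / 2 < g (1 - 1 / (l * t)) / g (1 - 1 / t) :=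
        (hRV l hl0).eventually (eventually_gt_nhds (by linarith))
      have E2 : ∀ᶠ t in atTop, c1 / 2 * t ≤ g (1 - 1 / t) :=
        hA (c1 / 2) (by linarith) (by linarith)
      have h5 : l ^ (γ - 1) * l = l ^ γ := by
        have := (Real.rpow_add hl0 (γ - 1) 1).symm
        simpa using this
      have h6 : 4 * K ≤ c1 * l ^ (γ - 1) := by
        rw [div_le_iff₀ hc1pos] at hlK; linarith
      have E3 : ∀ᶠ t in atTop, K * (l * t) ≤ g (1 - 1 / (l * t)) := by
        filter_upwards [E1, E2, eventually_gt_atTop 0] with t h1 h2 h3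
        have hft : 0 < g (1 - 1 / t) := lt_of_lt_of_le (by positivity) h2
        have h7 : l ^ γ / 2 * g (1 - 1 / t) < g (1 - 1 / (l * t)) :=
          (lt_div_iff₀ hft).mp h1
        have h8 : l ^ γ / 2 * (c1 / 2 * t) ≤ l ^ γ / 2 * g (1 - 1 / t) :=
          mul_le_mul_of_nonneg_left h2 (by positivity)
        have h9 : 4 * K * (l * t) ≤ c1 * l ^ (γ - 1) * (l * t) :=
          mul_le_mul_of_nonneg_right h6 (by positivity)
        have h10 : c1 * l ^ (γ - 1) * (l * t) = 4 * (l ^ γ / 2 * (c1 / 2 * t)) := by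
          rw [← h5]; ring
        linarith
      have hdiv : Tendsto (fun u : ℝ => u / l) atTop atTop :=
        tendsto_id.atTop_div_const hl0
      refine (hdiv.eventually E3).mono fun u hu => ?_
      have hlu : l * (u / l) = u := by field_simp
      rwa [hlu] at hu
  -- eventual bound for any a > 1
  have hev : ∀ a : ℝ, 1 < a → ∀ᶠ t in atTop, U t * c1 * Real.Gamma γ / t ≤ a := by
    intro a ha
    set s := Real.sqrt a with hs
    have hs1 : 1 < s := by
      rw [hs]
      exact (Real.lt_sqrt zero_le_one).mpr (by simpa using ha)
    have hss : s * s = a := Real.mul_self_sqrt (by linarith)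
    have hs0 : 0 < s := by linarith
    set K := c1 * Real.Gamma γ / s with hKdef
    have hK0 : 0 < K := by positivity
    have hKlt : K < c1 * Real.Gamma γ := by
      rw [hKdef, div_lt_iff₀ hs0]
      nlinarith [mul_pos hc1pos hΓ, hs1]
    obtain ⟨u0, hu0⟩ := eventually_atTop.1 (hMain K hK0 hKlt)
    have hU1 : ∀ᶠ t in atTop, g (1 - 1 / U t) / t < s :=
      hU.eventually (eventually_lt_nhds hs1)
    filter_upwards [hU1, eventually_gt_atTop 0,
      eventually_ge_atTop (max u0 0 * (c1 * Real.Gamma γ) / a)] with t h1 h2 h3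
    rw [div_le_iff₀ h2]
    by_cases hcase : u0 ≤ U t
    · have hb := hu0 (U t) hcase
      have hgt : g (1 - 1 / U t) < s * t := by
        rw [div_lt_iff₀ h2] at h1; exact h1
      have hKU : K * U t ≤ s * t := le_of_lt (lt_of_le_of_lt hb hgt)
      calc U t * c1 * Real.Gamma γ = K * U t * s := by
            rw [hKdef]; field_simp
        _ ≤ s * t * s := mul_le_mul_of_nonneg_right hKU hs0.le
        _ = a * t := by rw [← hss]; ring
    · push_neg at hcase
      have hub : U t * (c1 * Real.Gamma γ) ≤ max u0 0 * (c1 * Real.Gamma γ) :=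
        mul_le_mul_of_nonneg_right (le_trans hcase.le (le_max_left _ _)) (by positivity)
      have h4 : max u0 0 * (c1 * Real.Gamma γ) ≤ a * t := by
        rw [div_le_iff₀ (by linarith : (0 : ℝ) < a)] at h3
        linarith
      nlinarith [hub, h4]
  -- conclusion via limsup
  have hfinal : ∀ a : ℝ, 1 < a →
      limsup (fun t : ℝ => U t * c1 * Real.Gamma γ / t) atTop ≤ a := by
    intro a ha
    by_cases hcb : BddBelow {b : ℝ | ∀ᶠ t in atTop, U t * c1 * Real.Gamma γ / t ≤ b}
    · refine limsup_le_of_le ?_ (hev a ha)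
      obtain ⟨b, hb⟩ := hcb
      refine ⟨b, fun c hc => hb ?_⟩
      rw [Set.mem_setOf_eq]
      exact eventually_map.mp hc
    · rw [limsup_eq, Real.sInf_of_not_bddBelow hcb]; linarith
  by_contra hcon
  push_neg at hcon
  have := hfinal ((1 + limsup (fun t : ℝ => U t * c1 * Real.Gamma γ / t) atTop) / 2)
    (by linarith)
  linarith
end
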